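/- arXiv:2412.05109 — 5 statements merged into one kernel-verified Lean document; each statement's English description precedes it below -/
import Mathlib

section
/- For every x ∈ ℝ^m, the sum over all n ∈ ℤ^m of φ(x − n) equals 1, where φ is the spike function; i.e., the integer translates of the spike function form a partition of unity on ℝ^m. -/
/-!
Split off the first coordinate `t`. Of its integer translates only `k = ⌊t⌋` and `k = ⌊t⌋ + 1`
contribute, and with `u = fract t ∈ [0, 1)` the two spikes at `(u, y)` and `(u - 1, y)` add up
to the spike at `y` one dimension lower. Summing over the remaining coordinates and inducting on
`m` reduces the claim to the empty tuple, where the spike is `1`.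
-/

/-- The spike function `φ(x) = max{1 + min{x₁,...,x_m,0} − max{x₁,...,x_m,0}, 0}`. -/
noncomputable def spike (m : ℕ) (x : Fin m → ℝ) : ℝ :=
  max (1 + min (⨅ i, x i) 0 - max (⨆ i, x i) 0) 0

section ClampedExtrema

variable {ι : Type*} [Finite ι] (x : ι → ℝ) (c : ℝ)

theorem max_ciSup_zero_le_iff : max (⨆ i, x i) 0 ≤ c ↔ 0 ≤ c ∧ ∀ i, x i ≤ c :=
  ⟨fun h => ⟨(le_max_right _ _).trans h, fun i =>
      ((le_ciSup (Set.finite_range x).bddAbove i).trans (le_max_left _ _)).trans h⟩,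
    fun ⟨hc, hx⟩ => max_le (Real.iSup_le hx hc) hc⟩

theorem le_min_ciInf_zero_iff : c ≤ min (⨅ i, x i) 0 ↔ c ≤ 0 ∧ ∀ i, c ≤ x i :=
  ⟨fun h => ⟨h.trans (min_le_right _ _), fun i =>
      h.trans ((min_le_left _ _).trans (ciInf_le (Set.finite_range x).bddBelow i))⟩,
    fun ⟨hc, hx⟩ => le_min (Real.le_iInf hx hc) hc⟩

end ClampedExtrema

theorem max_ciSup_cons_zero {m : ℕ} (t : ℝ) (y : Fin m → ℝ) :
    max (⨆ i, (Fin.cons t y : Fin (m + 1) → ℝ) i) 0 = max t (max (⨆ i, y i) 0) :=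
  eq_of_forall_ge_iff fun c => by
    rw [max_ciSup_zero_le_iff, max_le_iff, max_ciSup_zero_le_iff, Fin.forall_fin_succ]
    simp only [Fin.cons_zero, Fin.cons_succ]
    tauto

theorem min_ciInf_cons_zero {m : ℕ} (t : ℝ) (y : Fin m → ℝ) :
    min (⨅ i, (Fin.cons t y : Fin (m + 1) → ℝ) i) 0 = min t (min (⨅ i, y i) 0) :=
  eq_of_forall_le_iff fun c => by
    rw [le_min_ciInf_zero_iff, le_min_iff, le_min_ciInf_zero_iff, Fin.forall_fin_succ]
    simp only [Fin.cons_zero, Fin.cons_succ]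
    tauto

theorem spike_eq_zero_of_one_le_abs {m : ℕ} {x : Fin m → ℝ} (i : Fin m) (h : 1 ≤ |x i|) :
    spike m x = 0 := by
  have hsup := (max_ciSup_zero_le_iff x _).1 le_rfl
  have hinf := (le_min_ciInf_zero_iff x _).1 le_rfl
  refine max_eq_right ?_
  rcases le_abs'.1 h with h | h <;> linarith [hsup.2 i, hinf.2 i, hsup.1, hinf.1]

theorem spike_zero (x : Fin 0 → ℝ) : spike 0 x = 1 := by
  simp [spike, Real.iInf_of_isEmpty, Real.iSup_of_isEmpty]

theorem eq_floor_or_eq_floor_add_one_of_abs_sub_lt_one {t : ℝ} {k : ℤ} (h : |t - k| < 1) :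
    k = ⌊t⌋ ∨ k = ⌊t⌋ + 1 := by
  rw [abs_sub_lt_iff] at h
  have h₁ : ⌊t⌋ - 1 < k := by
    have := Int.floor_le t
    exact_mod_cast (by push_cast; linarith : ((⌊t⌋ - 1 : ℤ) : ℝ) < k)
  have h₂ : k < ⌊t⌋ + 2 := by
    have := Int.lt_floor_add_one t
    exact_mod_cast (by push_cast; linarith : (k : ℝ) < ((⌊t⌋ + 2 : ℤ) : ℝ))
  omega

theorem spike_cons_add_spike_cons_sub_one {m : ℕ} {u : ℝ} (hu₀ : 0 ≤ u) (hu₁ : u < 1)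
    (y : Fin m → ℝ) :
    spike (m + 1) (Fin.cons u y) + spike (m + 1) (Fin.cons (u - 1) y) = spike m y := by
  have ha : min (⨅ i, y i) 0 ≤ 0 := min_le_right _ _
  have hb : 0 ≤ max (⨆ i, y i) 0 := le_max_right _ _
  simp only [spike, max_ciSup_cons_zero, min_ciInf_cons_zero, min_eq_right (ha.trans hu₀),
    max_eq_right (hb.trans' (by linarith : u - 1 ≤ 0))]
  simp only [max_def, min_def]
  split_ifs <;> linarith

theorem tsum_spike_cons_sub_intCast {m : ℕ} (t : ℝ) (y : Fin m → ℝ) :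
    ∑' k : ℤ, spike (m + 1) (Fin.cons (t - k) y) = spike m y := by
  have hsupp : ∀ k ∉ ({⌊t⌋, ⌊t⌋ + 1} : Finset ℤ), spike (m + 1) (Fin.cons (t - k) y) = 0 := by
    intro k hk
    refine spike_eq_zero_of_one_le_abs 0 (not_lt.1 fun h => hk ?_)
    simpa using eq_floor_or_eq_floor_add_one_of_abs_sub_lt_one h
  rw [tsum_eq_sum hsupp, Finset.sum_pair (by omega), ← spike_cons_add_spike_cons_sub_one
    (Int.fract_nonneg t) (Int.fract_lt_one t) y]
  push_cast
  rw [Int.fract, sub_add_eq_sub_sub]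

theorem summable_spike_sub_intCast {m : ℕ} (x : Fin m → ℝ) :
    Summable fun n : Fin m → ℤ => spike m (fun i => x i - n i) := by
  refine summable_of_ne_finset_zero
    (s := Fintype.piFinset fun i => ({⌊x i⌋, ⌊x i⌋ + 1} : Finset ℤ)) fun n hn => ?_
  obtain ⟨i, hi⟩ := not_forall.1 (Fintype.mem_piFinset.not.1 hn)
  refine spike_eq_zero_of_one_le_abs i (not_lt.1 fun h => hi ?_)
  simpa using eq_floor_or_eq_floor_add_one_of_abs_sub_lt_one h

theorem spike_partition_of_unity_general (m : ℕ) (x : Fin m → ℝ) :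
    ∑' n : Fin m → ℤ, spike m (fun i => x i - (n i : ℝ)) = 1 := by
  induction m with
  | zero => simp [spike_zero]
  | succ m ih =>
    have hcons : ∀ (k : ℤ) (n : Fin m → ℤ), (fun i => x i - (Fin.cons k n : Fin (m + 1) → ℤ) i)
        = Fin.cons (x 0 - k) (fun j => x j.succ - n j) := fun k n => by
      ext i; cases i using Fin.cases <;> simp
    let e := (Equiv.prodComm (Fin m → ℤ) ℤ).trans (Fin.consEquiv fun _ => ℤ)
    have hsum : Summable fun p => spike (m + 1) (fun i => x i - e p i) :=
      e.summable_iff.2 (summable_spike_sub_intCast x)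
    rw [← e.tsum_eq, hsum.tsum_prod]
    simp only [e, Equiv.trans_apply, Equiv.prodComm_apply, Prod.swap_prod_mk,
      Fin.consEquiv_apply, hcons, tsum_spike_cons_sub_intCast]
    exact ih _

/-- The integer translates of the spike function form a partition of unity on `ℝ^m`:
`∑_{n ∈ ℤ^m} φ(x − n) = 1` for every `x ∈ ℝ^m`. -/
theorem spike_partition_of_unity (m : ℕ) (hm : 0 < m) (x : Fin m → ℝ) :
    ∑' n : Fin m → ℤ, spike m (fun i => x i - (n i : ℝ)) = 1 :=
  spike_partition_of_unity_general m x
end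

section
/- Let S = {x ∈ [0,1]^m : x₁ ≥ x₂ ≥ ⋯ ≥ x_m} and let M = {0, e₁, e₁+e₂, ..., e₁+⋯+e_m} ⊆ ℕ₀^m. Then for all x ∈ S: φ(x − n) = 0 for every n ∈ ℕ₀^m \ M; moreover φ(x) = 1 − x₁, φ(x − e₁ − ⋯ − e_k) = x_k − x_{k+1} for k = 1,...,m−1, and φ(x − e₁ − ⋯ − e_m) = x_m. -/
/-- The lattice point `e₁ + ⋯ + e_k ∈ ℕ₀^m` (equal to `0` for `k = 0`). -/
def stepVec (m k : ℕ) : Fin m → ℕ := fun i => if (i : ℕ) < k then 1 else 0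

/-!
`φ(y)` is `1 - (b - a)` clipped at `0`, where `a ≤ 0 ≤ b` are the least and greatest elements
of `{0, y₁, …, y_m}`. For `x ∈ S` and a shift `n ∉ M`, this set contains two points at
distance `≥ 1`: either some `x_i - n_i ≤ -1`, or `n` increases somewhere (a non-increasing
`0/1` vector is some `e₁ + ⋯ + e_k`), `n_i < n_j` with `i < j`, and then
`x_j - n_j ≤ x_i - n_i - 1`. For `n = e₁ + ⋯ + e_k` the coordinates of `x - n` are
`x_1 - 1 ≥ ⋯ ≥ x_k - 1` (all in `[-1, 0]`) followed by `x_{k+1} ≥ ⋯ ≥ x_m` (all in `[0, 1]`),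
so `a = x_k - 1` and `b = x_{k+1}`, with `a = 0` for `k = 0` and `b = 0` for `k = m`.
-/

open Set

section InfSup

variable {ι : Type*} [Finite ι] (y : ι → ℝ)

theorem min_iInf_zero_eq_csInf : min (⨅ i, y i) 0 = sInf (insert 0 (range y)) := by
  cases isEmpty_or_nonempty ι
  · simp [range_eq_empty]
  · rw [csInf_insert (finite_range y).bddBelow (range_nonempty y), min_comm]
    rfl

theorem max_iSup_zero_eq_csSup : max (⨆ i, y i) 0 = sSup (insert 0 (range y)) := by
  cases isEmpty_or_nonempty ι
  · simp [range_eq_empty]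
  · rw [csSup_insert (finite_range y).bddAbove (range_nonempty y), max_comm]
    rfl

end InfSup

section Spike

variable {m : ℕ}

theorem spike_eq_csInf_csSup (y : Fin m → ℝ) :
    spike m y = max (1 + sInf (insert 0 (range y)) - sSup (insert 0 (range y))) 0 := by
  rw [spike, min_iInf_zero_eq_csInf, max_iSup_zero_eq_csSup]

theorem spike_eq_of_isLeast_of_isGreatest {y : Fin m → ℝ} {a b : ℝ} 
    (ha : IsLeast (insert 0 (range y)) a) (hb : IsGreatest (insert 0 (range y)) b)
    (hab : b - a ≤ 1) : spike m y = 1 + a - b := by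
  rw [spike_eq_csInf_csSup, ha.csInf_eq, hb.csSup_eq, max_eq_left (by linarith)]

theorem spike_eq_zero_of_mem {y : Fin m → ℝ} {a b : ℝ} (ha : a ∈ insert 0 (range y))
    (hb : b ∈ insert 0 (range y)) (hab : a + 1 ≤ b) : spike m y = 0 := by
  have hfin : (insert 0 (range y)).Finite := (finite_range y).insert 0
  rw [spike_eq_csInf_csSup]
  refine max_eq_right ?_
  linarith [csInf_le hfin.bddBelow ha, le_csSup hfin.bddAbove hb]

end Spike

theorem exists_eq_stepVec_of_antitone {m : ℕ} {n : Fin m → ℕ} (hn1 : ∀ i, n i ≤ 1)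
    (hn : Antitone n) : ∃ k ≤ m, n = stepVec m k := by
  set A := Finset.univ.filter fun j => n j = 1
  refine ⟨A.card, (Finset.card_le_univ A).trans_eq (Fintype.card_fin m), funext fun i => ?_⟩
  rcases Nat.le_one_iff_eq_zero_or_eq_one.mp (hn1 i) with hi | hi
  · have hA : A ⊆ Finset.Iio i := fun j hj => by
      simp only [A, Finset.mem_filter, Finset.mem_univ, true_and] at hj
      rw [Finset.mem_Iio]
      by_contra! hij
      have := hn hij
      omega
    have := (Finset.card_le_card hA).trans_eq (Fin.card_Iio i)
    simp only [stepVec, hi]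
    split_ifs <;> omega
  · have hA : Finset.Iic i ⊆ A := fun j hj => by
      have := hn (Finset.mem_Iic.mp hj)
      have := hn1 j
      simp only [A, Finset.mem_filter, Finset.mem_univ, true_and]
      omega
    have := (Fin.card_Iic i).symm.trans_le (Finset.card_le_card hA)
    simp only [stepVec, hi]
    split_ifs <;> omega

section Simplex

variable {m : ℕ} {x : Fin m → ℝ}

theorem spike_sub_eq_zero_of_ne_stepVec (hx : ∀ i, x i ∈ Icc (0 : ℝ) 1) (hxa : Antitone x)
    (n : Fin m → ℕ) (hn : ¬ ∃ k ≤ m, n = stepVec m k) :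
    spike m (fun i => x i - n i) = 0 := by
  by_cases h2 : ∃ i, 2 ≤ n i
  · obtain ⟨i, hi⟩ := h2
    refine spike_eq_zero_of_mem (mem_insert_of_mem _ ⟨i, rfl⟩) (mem_insert 0 _) ?_
    have : (2 : ℝ) ≤ n i := by exact_mod_cast hi
    linarith [(hx i).2]
  · simp only [not_exists, not_le] at h2
    have hn' : ¬ Antitone n := fun hanti =>
      hn (exists_eq_stepVec_of_antitone (fun i => Nat.lt_succ_iff.mp (h2 i)) hanti)
    obtain ⟨i, j, hij, hlt⟩ : ∃ i j, i ≤ j ∧ n i < n j := by simpa [Antitone] using hn'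
    refine spike_eq_zero_of_mem (mem_insert_of_mem _ ⟨j, rfl⟩) (mem_insert_of_mem _ ⟨i, rfl⟩) ?_
    have : (n i : ℝ) + 1 ≤ n j := by exact_mod_cast hlt
    linarith [hxa hij]

theorem isLeast_sub_stepVec (hx : ∀ i, x i ∈ Icc (0 : ℝ) 1) (hxa : Antitone x) {k : ℕ}
    (hk1 : 1 ≤ k) (hkm : k ≤ m) :
    IsLeast (insert 0 (range fun i => x i - (stepVec m k i : ℝ)))
      (x ⟨k - 1, by omega⟩ - 1) := by
  have hlast : stepVec m k ⟨k - 1, by omega⟩ = 1 := if_pos (by simp only; omega)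
  refine ⟨mem_insert_of_mem _ ⟨⟨k - 1, by omega⟩, by simp [hlast]⟩, ?_⟩
  rintro _ (rfl | ⟨i, rfl⟩)
  · linarith [(hx ⟨k - 1, by omega⟩).2]
  · simp only [stepVec]
    split_ifs with hi
    · have := hxa (show i ≤ ⟨k - 1, by omega⟩ from Fin.le_def.mpr (by simp only; omega))
      push_cast
      linarith
    · push_cast
      linarith [(hx i).1, (hx ⟨k - 1, by omega⟩).2]

theorem isGreatest_sub_stepVec (hx : ∀ i, x i ∈ Icc (0 : ℝ) 1) (hxa : Antitone x) {k : ℕ}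
    (hkm : k < m) :
    IsGreatest (insert 0 (range fun i => x i - (stepVec m k i : ℝ))) (x ⟨k, hkm⟩) := by
  refine ⟨mem_insert_of_mem _ ⟨⟨k, hkm⟩, by simp [stepVec]⟩, ?_⟩
  rintro _ (rfl | ⟨i, rfl⟩)
  · exact (hx _).1
  · simp only [stepVec]
    split_ifs with hi
    · push_cast
      linarith [(hx i).2, (hx ⟨k, hkm⟩).1]
    · have := hxa (show ⟨k, hkm⟩ ≤ i from Fin.le_def.mpr (by simp only; omega))
      push_cast
      linarith

theorem isGreatest_sub_stepVec_self (hx1 : ∀ i, x i ≤ 1) :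
    IsGreatest (insert 0 (range fun i => x i - (stepVec m m i : ℝ))) 0 := by
  refine ⟨mem_insert 0 _, ?_⟩
  rintro _ (rfl | ⟨i, rfl⟩)
  · exact le_rfl
  · simp [stepVec, hx1 i]

end Simplex

/-- On the simplex `S = {x ∈ [0,1]^m : x₁ ≥ ⋯ ≥ x_m}`, the translates of the spike
function vanish except for shifts in `M = {0, e₁, e₁+e₂, ..., e₁+⋯+e_m}`, and on those
shifts they reproduce the barycentric-type coordinates. -/
theorem spike_on_simplex (m : ℕ) (hm : 0 < m) (x : Fin m → ℝ)
    (hx01 : ∀ i, x i ∈ Set.Icc (0 : ℝ) 1)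
    (hxmono : ∀ i j : Fin m, i ≤ j → x j ≤ x i) :
    (∀ n : Fin m → ℕ, (¬ ∃ k ≤ m, n = stepVec m k) →
        spike m (fun i => x i - (n i : ℝ)) = 0) ∧
    spike m x = 1 - x ⟨0, hm⟩ ∧
    (∀ k : ℕ, ∀ _hk1 : 1 ≤ k, ∀ _hk2 : k < m,
        spike m (fun i => x i - (stepVec m k i : ℝ)) =
          x ⟨k - 1, by omega⟩ - x ⟨k, by omega⟩) ∧
    spike m (fun i => x i - (stepVec m m i : ℝ)) = x ⟨m - 1, by omega⟩ := by
  have hxa : Antitone x := hxmono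
  have hx0 : (fun i => x i - (stepVec m 0 i : ℝ)) = x := by simp [stepVec]
  have hleast0 : IsLeast (insert 0 (range x)) 0 :=
    ⟨mem_insert 0 _, by rintro _ (rfl | ⟨i, rfl⟩); exacts [le_rfl, (hx01 i).1]⟩
  refine ⟨spike_sub_eq_zero_of_ne_stepVec hx01 hxa, ?_, fun k hk1 hkm => ?_, ?_⟩
  · have hgreatest := isGreatest_sub_stepVec hx01 hxa hm
    rw [hx0] at hgreatest
    have hfirst := (hx01 ⟨0, hm⟩).2
    rw [spike_eq_of_isLeast_of_isGreatest hleast0 hgreatest (by linarith)]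
    ring
  · have hstep : x ⟨k, hkm⟩ ≤ x ⟨k - 1, by omega⟩ := hxa (Fin.mk_le_mk.mpr (by omega))
    rw [spike_eq_of_isLeast_of_isGreatest (isLeast_sub_stepVec hx01 hxa hk1 hkm.le)
      (isGreatest_sub_stepVec hx01 hxa hkm) (by linarith)]
    ring
  · have hlast := (hx01 ⟨m - 1, by omega⟩).1
    rw [spike_eq_of_isLeast_of_isGreatest (isLeast_sub_stepVec hx01 hxa hm le_rfl)
      (isGreatest_sub_stepVec_self fun i => (hx01 i).2) (by linarith)]
    ring
end

section
/- Let f: [0,1]^m → ℝ be Lipschitz (sup-norm), N ∈ ℕ, J = {0,1,...,N}, and let h: D_f → ℝ satisfy |h(y) − y| ≤ δ for all y with |y| ≤ ‖f‖_∞. Define f_N(x) = Σ_{n∈J^m} (h∘f)(n/N) φ(Nx − n), where φ is the spike function. Then ‖f − f_N‖_{L^∞([0,1]^m)} ≤ Lip(f)/N + δ. -/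
/-!
`spike m y` is the length of the window `{s ∈ [0,1) : s - yᵢ ∈ [0,1) for all i}`. For
`t ∈ [0,N]^m`, a point `s` lies in the window of `t - n` exactly when `nᵢ = ⌈tᵢ - s⌉` for all `i`,
so the windows of the translates `t - n`, `n ∈ {0,…,N}^m`, partition `[0,1)` and the spikes
`φ(Nx - n)` form a partition of unity on `[0,1]^m`. Moreover `φ(Nx - n)` vanishes unless
`‖x - n/N‖_∞ ≤ 1/N`, so `f_N(x)` is a convex combination of values `h(f(n/N))`, each within
`Lip(f)/N + δ` of `f(x)`.
-/

open scoped NNReal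

/-- The spike-function interpolant
`f_N(x) = ∑_{n ∈ {0,...,N}^m} (h ∘ f)(n/N) φ(Nx − n)`. -/
noncomputable def interpolant (m N : ℕ) (f : (Fin m → ℝ) → ℝ) (h : ℝ → ℝ)
    (x : Fin m → ℝ) : ℝ :=
  ∑ n : Fin m → Fin (N + 1),
    h (f (fun i => (n i : ℝ) / N)) * spike m (fun i => N * x i - (n i : ℝ))

open Function MeasureTheory Set

def spikeWindow (m : ℕ) (y : Fin m → ℝ) : Set ℝ :=
  {s | s ∈ Ico 0 1 ∧ ∀ i, s - y i ∈ Ico 0 1}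

theorem spikeWindow_eq_Ico {m : ℕ} (y : Fin m → ℝ) :
    spikeWindow m y = Ico (max (⨆ i, y i) 0) (1 + min (⨅ i, y i) 0) := by
  have hbdd : BddAbove (range y) := (finite_range y).bddAbove
  have hbdd' : BddBelow (range y) := (finite_range y).bddBelow
  ext s
  simp only [spikeWindow, mem_ofPred_eq, mem_Ico, max_le_iff, sub_nonneg, sub_lt_iff_lt_add']
  constructor
  · rintro ⟨⟨hs0, hs1⟩, hy⟩
    refine ⟨⟨Real.iSup_le (fun i => (hy i).1) hs0, hs0⟩, ?_⟩
    -- for `m = 0` this uses the junk value `⨅ i, y i = 0`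
    rcases isEmpty_or_nonempty (Fin m) with _ | _
    · simpa using hs1
    · obtain ⟨i, hi⟩ := exists_eq_ciInf_of_finite (f := y)
      rw [← hi, add_min]
      exact lt_min (by linarith [(hy i).2]) (by linarith)
  · rintro ⟨⟨hsup, hs0⟩, hinf⟩
    have hmin := min_le_left (⨅ i, y i) 0
    refine ⟨⟨hs0, by linarith [min_le_right (⨅ i, y i) 0]⟩,
      fun i => ⟨(le_ciSup hbdd i).trans hsup, by linarith [ciInf_le hbdd' i]⟩⟩

theorem spike_eq_volume_real_spikeWindow {m : ℕ} (y : Fin m → ℝ) :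
    spike m y = volume.real (spikeWindow m y) := by
  rw [spikeWindow_eq_Ico, Real.volume_real_Ico, spike]

theorem measurableSet_spikeWindow {m : ℕ} (y : Fin m → ℝ) : MeasurableSet (spikeWindow m y) := by
  rw [spikeWindow_eq_Ico]
  exact measurableSet_Ico

theorem abs_le_one_of_spike_ne_zero {m : ℕ} {y : Fin m → ℝ} (hy : spike m y ≠ 0) (i : Fin m) :
    |y i| ≤ 1 := by
  rw [spike_eq_volume_real_spikeWindow] at hy
  obtain ⟨s, ⟨hs0, hs1⟩, hsy⟩ : (spikeWindow m y).Nonempty := by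
    by_contra hempty
    simp [not_nonempty_iff_eq_empty.mp hempty] at hy
  obtain ⟨h0, h1⟩ := hsy i
  exact abs_le.mpr ⟨by linarith, by linarith⟩

theorem sub_sub_intCast_mem_Ico_iff (a s : ℝ) (z : ℤ) :
    s - (a - z) ∈ Ico (0 : ℝ) 1 ↔ ⌈a - s⌉ = z := by
  rw [Int.ceil_eq_iff, mem_Ico]
  constructor <;> rintro ⟨h1, h2⟩ <;> constructor <;> linarith

theorem mem_spikeWindow_sub_natCast_iff {m : ℕ} {t : Fin m → ℝ} {n : Fin m → ℕ} {s : ℝ} :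
    s ∈ spikeWindow m (fun i => t i - n i) ↔ s ∈ Ico 0 1 ∧ ∀ i, ⌈t i - s⌉ = n i := by
  have hcoord := fun i => sub_sub_intCast_mem_Ico_iff (t i) s (n i)
  simp only [Int.cast_natCast] at hcoord
  simp only [spikeWindow, mem_ofPred_eq, hcoord]

theorem pairwise_disjoint_spikeWindow (m N : ℕ) (t : Fin m → ℝ) :
    Pairwise (Disjoint on (fun n : Fin m → Fin (N + 1) => spikeWindow m (fun i => t i - n i))) := by
  intro n n' hne
  refine disjoint_left.mpr fun s hs hs' => hne (funext fun i => Fin.ext ?_)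
  have h := (mem_spikeWindow_sub_natCast_iff.mp hs).2 i
  rw [(mem_spikeWindow_sub_natCast_iff.mp hs').2 i] at h
  exact_mod_cast h.symm

theorem iUnion_spikeWindow_eq_Ico {m N : ℕ} {t : Fin m → ℝ} (ht0 : ∀ i, 0 ≤ t i)
    (htN : ∀ i, t i ≤ N) :
    ⋃ n : Fin m → Fin (N + 1), spikeWindow m (fun i => t i - n i) = Ico 0 1 := by
  refine Subset.antisymm (iUnion_subset fun n s hs => hs.1) fun s hs => ?_
  obtain ⟨hs0, hs1⟩ := id hs
  have hceil_nonneg (i : Fin m) : 0 ≤ ⌈t i - s⌉ := by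
    have := Int.lt_ceil.mpr (show ((-1 : ℤ) : ℝ) < t i - s by push_cast; linarith [ht0 i])
    omega
  have hceil_le (i : Fin m) : ⌈t i - s⌉ ≤ N :=
    Int.ceil_le.mpr (by push_cast; linarith [htN i])
  refine mem_iUnion.mpr ⟨fun i => ⟨⌈t i - s⌉.toNat, by have := hceil_le i; omega⟩,
    mem_spikeWindow_sub_natCast_iff.mpr ⟨hs, fun i => ?_⟩⟩
  simp [hceil_nonneg i]

theorem sum_spike_sub_eq_one {m N : ℕ} {t : Fin m → ℝ} (ht0 : ∀ i, 0 ≤ t i)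
    (htN : ∀ i, t i ≤ N) :
    ∑ n : Fin m → Fin (N + 1), spike m (fun i => t i - n i) = 1 := by
  simp_rw [spike_eq_volume_real_spikeWindow]
  rw [← measureReal_iUnion_fintype (pairwise_disjoint_spikeWindow m N t)
      (fun n => measurableSet_spikeWindow _)
      (fun n => by rw [spikeWindow_eq_Ico]; exact measure_Ico_lt_top.ne),
    iUnion_spikeWindow_eq_Ico ht0 htN, Real.volume_real_Ico_of_le zero_le_one, sub_zero]

theorem spike_nonneg (m : ℕ) (y : Fin m → ℝ) : 0 ≤ spike m y := le_max_right _ _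

theorem abs_sub_sum_mul_le {ι : Type*} (s : Finset ι) {w b : ι → ℝ} {a ε : ℝ}
    (hw : ∀ i ∈ s, 0 ≤ w i) (hsum : ∑ i ∈ s, w i = 1)
    (hb : ∀ i ∈ s, w i ≠ 0 → |a - b i| ≤ ε) :
    |a - ∑ i ∈ s, b i * w i| ≤ ε := by
  have hmul : ∀ i ∈ s, |a - b i| * w i ≤ ε * w i := fun i hi => by
    rcases eq_or_ne (w i) 0 with h0 | h0
    · simp [h0]
    · exact mul_le_mul_of_nonneg_right (hb i hi h0) (hw i hi)
  calc |a - ∑ i ∈ s, b i * w i| = |∑ i ∈ s, (a - b i) * w i| := by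
        simp only [sub_mul, Finset.sum_sub_distrib, ← Finset.mul_sum, hsum, mul_one]
    _ ≤ ∑ i ∈ s, |a - b i| * w i := by
        refine (Finset.abs_sum_le_sum_abs _ _).trans_eq (Finset.sum_congr rfl fun i hi => ?_)
        rw [abs_mul, abs_of_nonneg (hw i hi)]
    _ ≤ ∑ i ∈ s, ε * w i := Finset.sum_le_sum hmul
    _ = ε := by rw [← Finset.mul_sum, hsum, mul_one]

theorem gridPoint_mem_Icc {m N : ℕ} (n : Fin m → Fin (N + 1)) :
    (fun i => (n i : ℝ) / N) ∈ Icc (0 : Fin m → ℝ) 1 := by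
  refine ⟨fun i => by positivity, fun i => div_le_one_of_le₀ ?_ (Nat.cast_nonneg N)⟩
  exact Nat.cast_le.mpr (Nat.lt_succ_iff.mp (n i).isLt)

theorem dist_gridPoint_le_of_spike_ne_zero {m N : ℕ} (hN : 0 < N) {x : Fin m → ℝ}
    {n : Fin m → Fin (N + 1)} (hn : spike m (fun i => N * x i - n i) ≠ 0) :
    dist x (fun i => (n i : ℝ) / N) ≤ 1 / N := by
  have hNpos : (0 : ℝ) < N := by exact_mod_cast hN
  refine (dist_pi_le_iff (by positivity)).mpr fun i => ?_
  rw [Real.dist_eq, le_div_iff₀ hNpos, ← abs_of_pos hNpos, ← abs_mul, abs_of_pos hNpos,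
    sub_mul, div_mul_cancel₀ _ hNpos.ne', mul_comm]
  exact abs_le_one_of_spike_ne_zero hn i

theorem interpolant_sup_error_general (m N : ℕ) (hN : 0 < N)
    (f : (Fin m → ℝ) → ℝ) (L : ℝ≥0)
    (hf : LipschitzOnWith L f (Set.Icc (0 : Fin m → ℝ) 1))
    (δ : ℝ) (h : ℝ → ℝ)
    (hh : ∀ y : ℝ, |y| ≤ sSup ((fun x => |f x|) '' Set.Icc (0 : Fin m → ℝ) 1) →
      |h y - y| ≤ δ) :
    ∀ x ∈ Set.Icc (0 : Fin m → ℝ) 1,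
      |f x - interpolant m N f h x| ≤ (L : ℝ) / N + δ := by
  intro x ⟨hx0, hx1⟩
  have hbdd : BddAbove ((fun x => |f x|) '' Icc (0 : Fin m → ℝ) 1) :=
    (isCompact_Icc.image_of_continuousOn hf.continuousOn.abs).bddAbove
  refine abs_sub_sum_mul_le _ (fun n _ => spike_nonneg _ _)
    (sum_spike_sub_eq_one (fun i => mul_nonneg (Nat.cast_nonneg N) (hx0 i))
      (fun i => mul_le_of_le_one_right (Nat.cast_nonneg N) (hx1 i))) fun n _ hn => ?_
  set p : Fin m → ℝ := fun i => (n i : ℝ) / N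
  have hp : p ∈ Icc (0 : Fin m → ℝ) 1 := gridPoint_mem_Icc n
  have hfp : |f x - f p| ≤ L / N := by
    rw [← Real.dist_eq, div_eq_mul_one_div]
    exact (hf.dist_le_mul x ⟨hx0, hx1⟩ p hp).trans
      (mul_le_mul_of_nonneg_left (dist_gridPoint_le_of_spike_ne_zero hN hn) L.coe_nonneg)
  have hhp : |f p - h (f p)| ≤ δ := abs_sub_comm (f p) _ ▸ hh (f p) (le_csSup hbdd ⟨p, hp, rfl⟩)
  calc |f x - h (f p)| ≤ |f x - f p| + |f p - h (f p)| := abs_sub_le _ _ _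
    _ ≤ L / N + δ := add_le_add hfp hhp

/-- If `f : [0,1]^m → ℝ` is Lipschitz (sup-norm) with constant `L` and `h` satisfies
`|h(y) − y| ≤ δ` on `D_f = {y : |y| ≤ ‖f‖_∞}`, then the spike interpolant `f_N`
satisfies `‖f − f_N‖_{L^∞([0,1]^m)} ≤ L/N + δ`. -/
theorem interpolant_sup_error (m N : ℕ) (hm : 0 < m) (hN : 0 < N)
    (f : (Fin m → ℝ) → ℝ) (L : ℝ≥0)
    (hf : LipschitzOnWith L f (Set.Icc (0 : Fin m → ℝ) 1))
    (δ : ℝ) (hδ : 0 ≤ δ) (h : ℝ → ℝ)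
    (hh : ∀ y : ℝ, |y| ≤ sSup ((fun x => |f x|) '' Set.Icc (0 : Fin m → ℝ) 1) →
      |h y - y| ≤ δ) :
    ∀ x ∈ Set.Icc (0 : Fin m → ℝ) 1,
      |f x - interpolant m N f h x| ≤ (L : ℝ) / N + δ :=
  interpolant_sup_error_general m N hN f L hf δ h hh
end

section
/- Let n, N ∈ ℕ with N ≥ n, δ = 1/N, and let w₁,...,w_n ∈ [0,1] with Σ w_k = 1. Then there exist ŵ₁,...,ŵ_n ∈ δℕ (strictly positive integer multiples of δ) with Σ ŵ_k = 1 and Σ_{k=1}^n |ŵ_k − w_k| ≤ 4δ(n−1). -/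
/-!
Quantize on the coarser scale `N - n`: every coordinate `k ≠ i` gets `⌊(N - n) w_k⌋ + 1` quanta
of size `1/N`, which is positive and errs by at most `(1 + n w_k)/N`, while the coordinate `i`
gets the remaining quanta. Those total at most `N - 1`, so coordinate `i` keeps at least one.
Choosing `i` with `w_i ≥ 1/n` makes the errors off `i` sum to at most `2(n - 1)/N`, and since
both vectors sum to `1`, the error at `i` is at most that sum again.
-/

open Finset

section

variable {ι : Type*} [Fintype ι] [DecidableEq ι]

theorem abs_sub_le_sum_erase_of_sum_eq {a b : ι → ℝ} (h : ∑ k, a k = ∑ k, b k) (i : ι) :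
    |a i - b i| ≤ ∑ k ∈ univ.erase i, |a k - b k| := by
  have hdiff : a i - b i = -∑ k ∈ univ.erase i, (a k - b k) := by
    rw [sum_erase_eq_sub (mem_univ i), sum_sub_distrib, h]
    ring
  rw [hdiff, abs_neg]
  exact abs_sum_le_sum_abs _ _

theorem sum_abs_sub_le_two_mul_sum_erase_of_sum_eq {a b : ι → ℝ} (h : ∑ k, a k = ∑ k, b k)
    (i : ι) : ∑ k, |a k - b k| ≤ 2 * ∑ k ∈ univ.erase i, |a k - b k| := by
  rw [← add_sum_erase univ (fun k ↦ |a k - b k|) (mem_univ i)]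
  linarith [abs_sub_le_sum_erase_of_sum_eq h i]

theorem sum_erase_eq_one_sub {w : ι → ℝ} (hsum : ∑ k, w k = 1) (i : ι) :
    ∑ k ∈ univ.erase i, w k = 1 - w i := by
  rw [sum_erase_eq_sub (mem_univ i), hsum]

theorem card_erase_univ_eq_sub_one (i : ι) :
    ((univ.erase i).card : ℝ) = Fintype.card ι - 1 := by
  rw [card_erase_of_mem (mem_univ i), card_univ,
    Nat.cast_sub (Fintype.card_pos_iff.mpr ⟨i⟩), Nat.cast_one]

end

theorem exists_one_le_card_mul_of_sum_eq_one {ι : Type*} [Fintype ι] {w : ι → ℝ}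
    (hsum : ∑ k, w k = 1) : ∃ i, 1 ≤ Fintype.card ι * w i := by
  have hne : (univ : Finset ι).Nonempty := by
    by_contra h
    simp [not_nonempty_iff_eq_empty.mp h] at hsum
  have hle : ∑ _k : ι, (1 : ℝ) ≤ ∑ k, Fintype.card ι * w k := by
    simp [← mul_sum, hsum]
  obtain ⟨i, -, hi⟩ := exists_le_of_sum_le hne hle
  exact ⟨i, hi⟩

theorem abs_floor_add_one_div_sub_le {N a x : ℝ} (hN : 0 < N) (ha : 0 ≤ a) (haN : a ≤ N)
    (hx : 0 ≤ x) : |((⌊a * x⌋₊ + 1 : ℕ) : ℝ) / N - x| ≤ (1 + (N - a) * x) / N := by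
  have hax : 0 ≤ a * x := mul_nonneg ha hx
  have hlo : a * x ≤ ((⌊a * x⌋₊ + 1 : ℕ) : ℝ) := by
    push_cast; exact (Nat.lt_floor_add_one _).le
  have hhi : ((⌊a * x⌋₊ + 1 : ℕ) : ℝ) ≤ a * x + 1 := by
    push_cast; linarith [Nat.floor_le hax]
  have hNa : 0 ≤ (N - a) * x := mul_nonneg (by linarith) hx
  rw [show ((⌊a * x⌋₊ + 1 : ℕ) : ℝ) / N - x = (((⌊a * x⌋₊ + 1 : ℕ) : ℝ) - N * x) / N by
    field_simp, abs_div, abs_of_pos hN]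
  gcongr
  rw [abs_le]
  constructor <;> linarith

section

variable {ι : Type*} [Fintype ι]

noncomputable def roundCount (N : ℕ) (w : ι → ℝ) (k : ι) : ℕ :=
  ⌊((N : ℝ) - Fintype.card ι) * w k⌋₊ + 1

theorem sum_erase_roundCount_lt [DecidableEq ι] {N : ℕ} {w : ι → ℝ}
    (hnN : Fintype.card ι ≤ N) (hw0 : ∀ k, 0 ≤ w k) (hsum : ∑ k, w k = 1) (i : ι) :
    ∑ k ∈ univ.erase i, roundCount N w k < N := by
  set a : ℝ := (N : ℝ) - Fintype.card ι
  have ha : 0 ≤ a := sub_nonneg.mpr (by exact_mod_cast hnN)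
  have hcount : ∀ k, (roundCount N w k : ℝ) ≤ a * w k + 1 := fun k ↦ by
    rw [roundCount, Nat.cast_add_one]
    linarith [Nat.floor_le (mul_nonneg ha (hw0 k))]
  have : ((∑ k ∈ univ.erase i, roundCount N w k : ℕ) : ℝ) < N :=
    calc ((∑ k ∈ univ.erase i, roundCount N w k : ℕ) : ℝ)
        ≤ ∑ k ∈ univ.erase i, (a * w k + 1) := by
          push_cast; exact sum_le_sum fun k _ ↦ hcount k
      _ = a * (1 - w i) + (Fintype.card ι - 1) := by
          rw [sum_add_distrib, ← mul_sum, sum_erase_eq_one_sub hsum, sum_const, nsmul_one,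
            card_erase_univ_eq_sub_one]
      _ < N := by nlinarith [hw0 i]
  exact_mod_cast this

variable [DecidableEq ι]

noncomputable def quantization (N : ℕ) (w : ι → ℝ) (i : ι) : ι → ℕ :=
  Function.update (roundCount N w) i (N - ∑ k ∈ univ.erase i, roundCount N w k)

theorem sum_quantization {N : ℕ} {w : ι → ℝ} (hnN : Fintype.card ι ≤ N) (hw0 : ∀ k, 0 ≤ w k)
    (hsum : ∑ k, w k = 1) (i : ι) : ∑ k, quantization N w i k = N := by
  rw [quantization, sum_update_of_mem (mem_univ i), sdiff_singleton_eq_erase,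
    Nat.sub_add_cancel (sum_erase_roundCount_lt hnN hw0 hsum i).le]

theorem quantization_pos {N : ℕ} {w : ι → ℝ} (hnN : Fintype.card ι ≤ N) (hw0 : ∀ k, 0 ≤ w k)
    (hsum : ∑ k, w k = 1) (i k : ι) : 0 < quantization N w i k := by
  rcases eq_or_ne k i with rfl | hk
  · rw [quantization, Function.update_self]
    exact Nat.sub_pos_of_lt (sum_erase_roundCount_lt hnN hw0 hsum k)
  · rw [quantization, Function.update_of_ne hk]
    exact Nat.succ_pos _

theorem sum_erase_abs_quantization_div_sub_le {N : ℕ} {w : ι → ℝ} (hN : 0 < N)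
    (hnN : Fintype.card ι ≤ N) (hw0 : ∀ k, 0 ≤ w k) (hsum : ∑ k, w k = 1) {i : ι}
    (hi : 1 ≤ Fintype.card ι * w i) :
    ∑ k ∈ univ.erase i, |(quantization N w i k : ℝ) / N - w k|
      ≤ 2 * (Fintype.card ι - 1) / N := by
  set n : ℝ := (Fintype.card ι : ℝ)
  have hNR : (0 : ℝ) < N := by exact_mod_cast hN
  have hcoord : ∀ k ∈ univ.erase i,
      |(quantization N w i k : ℝ) / N - w k| ≤ (1 + n * w k) / N := by
    intro k hk
    rw [quantization, Function.update_of_ne (ne_of_mem_erase hk)]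
    simpa [roundCount, n] using abs_floor_add_one_div_sub_le hNR
      (sub_nonneg.mpr (by exact_mod_cast hnN)) (sub_le_self _ (Nat.cast_nonneg _)) (hw0 k)
  calc ∑ k ∈ univ.erase i, |(quantization N w i k : ℝ) / N - w k|
      ≤ ∑ k ∈ univ.erase i, (1 + n * w k) / N := sum_le_sum hcoord
    _ = ((n - 1) + n * (1 - w i)) / N := by
        rw [← sum_div, sum_add_distrib, ← mul_sum, sum_erase_eq_one_sub hsum, sum_const,
          nsmul_one, card_erase_univ_eq_sub_one]
    _ ≤ 2 * (n - 1) / N := by gcongr; linarith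

end

/-- Quantization of probability vectors: if `N ≥ n`, `δ = 1/N`, and `w₁,...,w_n ∈ [0,1]`
sum to `1`, then there exist `ŵ₁,...,ŵ_n`, each a strictly positive integer multiple of
`δ`, summing to `1`, with `∑ |ŵ_k − w_k| ≤ 4δ(n−1)`. -/
theorem quantize_probability_vector (n N : ℕ) (hN : 0 < N) (hnN : n ≤ N)
    (w : Fin n → ℝ) (hw : ∀ k, w k ∈ Set.Icc (0 : ℝ) 1)
    (hsum : ∑ k, w k = 1) :
    ∃ what : Fin n → ℝ,
      (∀ k, ∃ j : ℕ, 0 < j ∧ what k = (j : ℝ) * (1 / N)) ∧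
      (∑ k, what k = 1) ∧
      (∑ k, |what k - w k| ≤ 4 * (1 / N) * ((n : ℝ) - 1)) := by
  have hw0 : ∀ k, 0 ≤ w k := fun k ↦ (hw k).1
  have hcard : Fintype.card (Fin n) ≤ N := by rwa [Fintype.card_fin]
  obtain ⟨i, hi⟩ := exists_one_le_card_mul_of_sum_eq_one hsum
  set q := quantization N w i
  have hqsum : ∑ k, (q k : ℝ) / N = 1 := by
    rw [← sum_div, ← Nat.cast_sum, sum_quantization hcard hw0 hsum]
    exact div_self (Nat.cast_ne_zero.mpr hN.ne')
  refine ⟨fun k ↦ (q k : ℝ) / N, fun k ↦ ⟨q k, quantization_pos hcard hw0 hsum i k,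
    (mul_one_div _ _).symm⟩, hqsum, ?_⟩
  calc ∑ k, |(q k : ℝ) / N - w k|
      ≤ 2 * ∑ k ∈ univ.erase i, |(q k : ℝ) / N - w k| :=
        sum_abs_sub_le_two_mul_sum_erase_of_sum_eq (hqsum.trans hsum.symm) i
    _ ≤ 2 * (2 * ((n : ℝ) - 1) / N) := by
        gcongr
        simpa using sum_erase_abs_quantization_div_sub_le hN hcard hw0 hsum hi
    _ = 4 * (1 / N) * ((n : ℝ) - 1) := by ring
end

section
/- Let g: ℝ → [0,1] be the sawtooth function (g(x) = 2x on [0,1/2), 2(1−x) on [1/2,1], 0 elsewhere) and g_s its s-fold composition. Then g_s(x) = 0 for x ∉ (0,1), and for x ∈ [0,1]: g_s(x) = 2^s x − ⌊2^s x⌋ if ⌊2^s x⌋ is even, and g_s(x) = 1 − 2^s x + ⌊2^s x⌋ if ⌊2^s x⌋ is odd. Moreover, g_s = Σ_{k=1}^{2^{s−1}} h_k where h_k(x) = g(2^{s−1}x − k + 1), and each h_k vanishes outside ((k−1)/2^{s−1}, k/2^{s−1}). -/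
/-!
The triangle wave `T y`, the distance from `y` to `2ℤ`, is 2-periodic and even, takes values
in `[0,1]`, and agrees with `|y|` on `[-1,1]`. On `[0,1]` the sawtooth is
`g y = T (2y)`, and `T (2 T y) = T (2y)` because `T y = ±(y - 2k)` for an integer `k`. Hence
`g_s x = T (2^s x)` on `[0,1]`, which is the parity formula. For the decomposition, the
translates `g (y - k)` have disjoint supports `(k, k+1)`, so at `y = 2^(s-1) x` only the term
`k = ⌊y⌋` survives, and it equals `T (2y - 2k) = T (2y)`.
-/

/-- The sawtooth function: `g(x) = 2x` on `[0,1/2)`, `g(x) = 2(1−x)` on `[1/2,1]`,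
and `g(x) = 0` elsewhere. -/
noncomputable def sawtooth (x : ℝ) : ℝ :=
  if 0 ≤ x ∧ x < 1 / 2 then 2 * x
  else if 1 / 2 ≤ x ∧ x ≤ 1 then 2 * (1 - x)
  else 0

open Set

noncomputable def triangleWave (y : ℝ) : ℝ := ‖(y : AddCircle (2 : ℝ))‖

lemma triangleWave_neg (y : ℝ) : triangleWave (-y) = triangleWave y := by
  simp [triangleWave]

lemma triangleWave_add_two_mul_intCast (y : ℝ) (k : ℤ) :
    triangleWave (y + 2 * k) = triangleWave y := by
  have : ((2 * k : ℝ) : AddCircle (2 : ℝ)) = 0 := by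
    rw [mul_comm, ← zsmul_eq_mul, AddCircle.coe_zsmul, AddCircle.coe_period, smul_zero]
  simp [triangleWave, this]

lemma exists_triangleWave_eq_abs_sub (y : ℝ) : ∃ k : ℤ, triangleWave y = |y - 2 * k| :=
  ⟨round (2⁻¹ * y), by rw [triangleWave, AddCircle.norm_eq, mul_comm]⟩

lemma triangleWave_eq_abs {y : ℝ} (hy : |y| ≤ 1) : triangleWave y = |y| :=
  (AddCircle.norm_coe_eq_abs_iff (p := 2) two_ne_zero).2 (by norm_num [hy])

lemma triangleWave_eq_self {y : ℝ} (h0 : 0 ≤ y) (h1 : y ≤ 1) : triangleWave y = y := by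
  rw [triangleWave_eq_abs (abs_le.2 ⟨by linarith, h1⟩), abs_of_nonneg h0]

lemma triangleWave_nonneg (y : ℝ) : 0 ≤ triangleWave y := norm_nonneg _

lemma triangleWave_le_one (y : ℝ) : triangleWave y ≤ 1 := by
  simpa [triangleWave] using
    AddCircle.norm_le_half_period (p := (2 : ℝ)) (x := (y : AddCircle (2 : ℝ))) two_ne_zero

lemma triangleWave_two_mul_triangleWave (y : ℝ) :
    triangleWave (2 * triangleWave y) = triangleWave (2 * y) := by
  obtain ⟨k, hk⟩ := exists_triangleWave_eq_abs_sub y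
  have h : triangleWave (2 * (y - 2 * k)) = triangleWave (2 * y) := by
    rw [← triangleWave_add_two_mul_intCast _ (2 * k)]; push_cast; ring_nf
  rcases abs_choice (y - 2 * k) with habs | habs <;> rw [hk, habs]
  · exact h
  · rw [mul_neg, triangleWave_neg, h]

lemma triangleWave_of_even_floor {y : ℝ} (h : Even ⌊y⌋) : triangleWave y = Int.fract y := by
  obtain ⟨m, hm⟩ := h
  have hy : y = Int.fract y + 2 * (m : ℝ) := by
    rw [← Int.self_sub_floor, hm]; push_cast; ring
  rw [hy, triangleWave_add_two_mul_intCast, ← hy,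
    triangleWave_eq_self (Int.fract_nonneg y) (Int.fract_lt_one y).le]

lemma triangleWave_of_odd_floor {y : ℝ} (h : Odd ⌊y⌋) :
    triangleWave y = 1 - Int.fract y := by
  obtain ⟨m, hm⟩ := h
  have hy : y = -(1 - Int.fract y) + 2 * ((m + 1 : ℤ) : ℝ) := by
    rw [← Int.self_sub_floor, hm]; push_cast; ring
  rw [hy, triangleWave_add_two_mul_intCast, triangleWave_neg, ← hy,
    triangleWave_eq_self (by linarith [Int.fract_lt_one y]) (by linarith [Int.fract_nonneg y])]

lemma sawtooth_eq_zero_of_notMem_Ioo {y : ℝ} (hy : y ∉ Ioo 0 1) : sawtooth y = 0 := by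
  rw [mem_Ioo, not_and_or, not_lt, not_lt] at hy
  unfold sawtooth
  split_ifs with h₁ h₂
  · obtain rfl : y = 0 := by rcases hy with hy | hy <;> linarith [h₁.1, h₁.2]
    ring
  · obtain rfl : y = 1 := by rcases hy with hy | hy <;> linarith [h₂.1, h₂.2]
    ring
  · rfl

lemma sawtooth_eq_triangleWave {y : ℝ} (hy : y ∈ Icc 0 1) :
    sawtooth y = triangleWave (2 * y) := by
  obtain ⟨h0, h1⟩ := hy
  rcases lt_or_ge y (1 / 2) with h | h
  · rw [sawtooth, if_pos ⟨h0, h⟩, triangleWave_eq_self (by linarith) (by linarith)]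
  · rw [sawtooth, if_neg (fun h' ↦ h.not_gt h'.2), if_pos ⟨h, h1⟩, ← triangleWave_neg,
      ← triangleWave_add_two_mul_intCast _ 1,
      triangleWave_eq_self (by push_cast; linarith) (by push_cast; linarith)]
    push_cast; ring

lemma sawtooth_triangleWave (y : ℝ) : sawtooth (triangleWave y) = triangleWave (2 * y) := by
  rw [sawtooth_eq_triangleWave ⟨triangleWave_nonneg y, triangleWave_le_one y⟩,
    triangleWave_two_mul_triangleWave]

lemma sawtooth_iterate_eq_triangleWave (s : ℕ) {x : ℝ} (hx : x ∈ Icc 0 1) :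
    sawtooth^[s] x = triangleWave (2 ^ s * x) := by
  induction s with
  | zero => simp [triangleWave_eq_self hx.1 hx.2]
  | succ s ih =>
    rw [Function.iterate_succ_apply', ih, sawtooth_triangleWave, pow_succ, mul_comm _ 2, mul_assoc]

lemma sawtooth_iterate_eq_zero_of_notMem_Ioo {s : ℕ} (hs : s ≠ 0) {x : ℝ}
    (hx : x ∉ Ioo 0 1) : sawtooth^[s] x = 0 := by
  obtain ⟨s, rfl⟩ := Nat.exists_eq_succ_of_ne_zero hs
  rw [Function.iterate_succ_apply, sawtooth_eq_zero_of_notMem_Ioo hx,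
    Function.iterate_fixed (by norm_num [sawtooth])]

lemma sub_natCast_notMem_Ioo_of_ne_floor {y : ℝ} {k : ℕ} (hk : (k : ℤ) ≠ ⌊y⌋) :
    y - k ∉ Ioo 0 1 := by
  rintro ⟨h0, h1⟩
  exact hk (Int.floor_eq_iff.2 ⟨by push_cast; linarith, by push_cast; linarith⟩).symm

lemma sum_range_sawtooth_sub_of_mem_Ioo {N : ℕ} {y : ℝ} (hy : y ∈ Ioo 0 (N : ℝ)) :
    ∑ k ∈ Finset.range N, sawtooth (y - k) = triangleWave (2 * y) := by
  obtain ⟨m, hm⟩ : ∃ m : ℕ, ⌊y⌋ = m :=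
    Int.eq_ofNat_of_zero_le (Int.floor_nonneg.2 hy.1.le)
  have hmN : m < N := by
    have := Int.floor_lt.2 (show y < ((N : ℤ) : ℝ) by exact_mod_cast hy.2)
    omega
  rw [Finset.sum_eq_single_of_mem m (Finset.mem_range.2 hmN)]
  · have hfract : y - m = Int.fract y := by rw [← Int.self_sub_floor, hm, Int.cast_natCast]
    rw [sawtooth_eq_triangleWave, ← triangleWave_add_two_mul_intCast _ m]
    · push_cast; ring_nf
    · rw [hfract]; exact ⟨Int.fract_nonneg y, (Int.fract_lt_one y).le⟩
  · intro k _ hkm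
    exact sawtooth_eq_zero_of_notMem_Ioo (sub_natCast_notMem_Ioo_of_ne_floor (by omega))

lemma sum_range_sawtooth_sub_of_notMem_Ioo {N : ℕ} {y : ℝ} (hy : y ∉ Ioo 0 (N : ℝ)) :
    ∑ k ∈ Finset.range N, sawtooth (y - k) = 0 := by
  refine Finset.sum_eq_zero fun k hk ↦
    sawtooth_eq_zero_of_notMem_Ioo fun ⟨h0, h1⟩ ↦ hy ⟨?_, ?_⟩
  · linarith [(Nat.cast_nonneg k : (0 : ℝ) ≤ k)]
  · have : (k : ℝ) + 1 ≤ N := by exact_mod_cast Finset.mem_range.1 hk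
    linarith

lemma sawtooth_iterate_succ_eq_sum (p : ℕ) (x : ℝ) :
    sawtooth^[p + 1] x = ∑ k ∈ Finset.range (2 ^ p), sawtooth (2 ^ p * x - k) := by
  have hpow : (0 : ℝ) < 2 ^ p := by positivity
  have hmem : 2 ^ p * x ∈ Ioo 0 ((2 ^ p : ℕ) : ℝ) ↔ x ∈ Ioo 0 1 := by
    rw [Nat.cast_pow, Nat.cast_ofNat, mem_Ioo, mem_Ioo, mul_pos_iff_of_pos_left hpow,
      mul_lt_iff_lt_one_right hpow]
  by_cases hx : x ∈ Ioo 0 1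
  · rw [sum_range_sawtooth_sub_of_mem_Ioo (hmem.2 hx),
      sawtooth_iterate_eq_triangleWave _ (Ioo_subset_Icc_self hx), pow_succ', mul_assoc]
  · rw [sum_range_sawtooth_sub_of_notMem_Ioo (mt hmem.1 hx),
      sawtooth_iterate_eq_zero_of_notMem_Ioo p.succ_ne_zero hx]

lemma mul_sub_mem_Ioo_zero_one_iff {a : ℝ} (ha : 0 < a) (x k : ℝ) :
    a * x - k ∈ Ioo 0 1 ↔ x ∈ Ioo (k / a) ((k + 1) / a) := by
  rw [mem_Ioo, mem_Ioo, div_lt_iff₀ ha, lt_div_iff₀ ha, sub_pos, sub_lt_iff_lt_add', mul_comm x]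

/-- Properties of the `s`-fold composition `g_s` of the sawtooth function:
it vanishes outside `(0,1)`; on `[0,1]` it equals `2^s x − ⌊2^s x⌋` or
`1 − 2^s x + ⌊2^s x⌋` according to the parity of `⌊2^s x⌋`; and it decomposes as
`g_s = ∑_{k=1}^{2^{s−1}} h_k` with `h_k(x) = g(2^{s−1} x − k + 1)`, each `h_k`
vanishing outside `((k−1)/2^{s−1}, k/2^{s−1})`. -/
theorem sawtooth_iterate_properties (s : ℕ) (hs : 1 ≤ s) :
    (∀ x : ℝ, x ∉ Set.Ioo (0 : ℝ) 1 → sawtooth^[s] x = 0) ∧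
    (∀ x ∈ Set.Icc (0 : ℝ) 1,
      (Even ⌊(2 : ℝ) ^ s * x⌋ → sawtooth^[s] x = 2 ^ s * x - (⌊(2 : ℝ) ^ s * x⌋ : ℝ)) ∧
      (Odd ⌊(2 : ℝ) ^ s * x⌋ → sawtooth^[s] x = 1 - 2 ^ s * x + (⌊(2 : ℝ) ^ s * x⌋ : ℝ))) ∧
    (∀ x : ℝ, sawtooth^[s] x =
      ∑ k ∈ Finset.range (2 ^ (s - 1)), sawtooth (2 ^ (s - 1) * x - (k : ℝ))) ∧
    (∀ k ∈ Finset.range (2 ^ (s - 1)), ∀ x : ℝ,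
      x ∉ Set.Ioo ((k : ℝ) / 2 ^ (s - 1)) (((k : ℝ) + 1) / 2 ^ (s - 1)) →
        sawtooth (2 ^ (s - 1) * x - (k : ℝ)) = 0) := by
  obtain ⟨p, rfl⟩ := Nat.exists_eq_add_of_le' hs
  rw [Nat.add_sub_cancel]
  refine ⟨fun x hx ↦ sawtooth_iterate_eq_zero_of_notMem_Ioo p.succ_ne_zero hx,
    fun x hx ↦ ⟨fun h ↦ ?_, fun h ↦ ?_⟩, sawtooth_iterate_succ_eq_sum p,
    fun k _ x hx ↦ sawtooth_eq_zero_of_notMem_Ioo ?_⟩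
  · rw [sawtooth_iterate_eq_triangleWave _ hx, triangleWave_of_even_floor h, Int.fract]
  · rw [sawtooth_iterate_eq_triangleWave _ hx, triangleWave_of_odd_floor h, Int.fract]
    ring
  · rwa [mul_sub_mem_Ioo_zero_one_iff (by positivity)]
end
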